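/- (Theorem 1, sufficient communication-rate condition) Let Ĉ ≥ 1, λ̌ > 0, L ∈ ℕ, μ ∈ (0,1]. Define Ť* = −(1/λ̌) ln( ((1+μ)^{1/L} − 1)/(2Ĉ) ). If Ť > Ť*, then β̂ := Ĉ e^{−λ̌ Ť} satisfies β̂ < (1/2)((1+μ)^{1/L} − 1); consequently, under the recursion p_{k+1} = (H_k ⊗ I₂) p_k + w_k with Δ(w_k) ≤ 2β̂ Δ(p_k) and τ₁(H_{k+L−1}⋯H_k) ≤ 1 − μ for all k, the disagreement Δ(p_k) → 0 as k → ∞. -/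

import Mathlib

open Filter

/-- disagreement seminorm on n-tuples of vectors in ℝ² -/
noncomputable def Delta {n : ℕ} (x : Fin n → EuclideanSpace ℝ (Fin 2)) : ℝ :=
  ⨆ p : Fin n × Fin n, ‖x p.1 - x p.2‖

/-- row-stochastic matrix -/
def RowStochastic {n : ℕ} (A : Matrix (Fin n) (Fin n) ℝ) : Prop :=
  (∀ i j, 0 ≤ A i j) ∧ (∀ i, ∑ j, A i j = 1)

/-- coefficient of ergodicity -/
noncomputable def tau1 {n : ℕ} (A : Matrix (Fin n) (Fin n) ℝ) : ℝ :=
  (1/2) * ⨆ p : Fin n × Fin n, ∑ s, |A p.1 s - A p.2 s|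

/-- the ordered backward product H_{k+L-1} ⋯ H_{k+1} H_k -/
noncomputable def backProd {n : ℕ} (H : ℕ → Matrix (Fin n) (Fin n) ℝ) (k L : ℕ) :
    Matrix (Fin n) (Fin n) ℝ :=
  (List.ofFn (fun ℓ : Fin L => H (k + (L - 1 - ℓ.val)))).prod


/- ---------- auxiliary lemmas ---------- -/

abbrev E2' := EuclideanSpace ℝ (Fin 2)

noncomputable def mstep {n : ℕ} (A : Matrix (Fin n) (Fin n) ℝ) (x : Fin n → E2') :
    Fin n → E2' := fun i => ∑ j, A i j • x j

section lems
variable {n : ℕ}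

lemma norm_sub_le_Delta (x : Fin n → E2') (i j : Fin n) :
    ‖x i - x j‖ ≤ Delta x :=
  le_ciSup (f := fun p : Fin n × Fin n => ‖x p.1 - x p.2‖)
    (Set.Finite.bddAbove (Set.finite_range _)) (i, j)

lemma Delta_nonneg [Nonempty (Fin n)] (x : Fin n → E2') : 0 ≤ Delta x := by
  obtain ⟨i⟩ := ‹Nonempty (Fin n)›
  exact le_trans (norm_nonneg _) (norm_sub_le_Delta x i i)

lemma Delta_le [Nonempty (Fin n)] (x : Fin n → E2') (a : ℝ)
    (h : ∀ i j, ‖x i - x j‖ ≤ a) : Delta x ≤ a :=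
  ciSup_le fun p => h p.1 p.2

lemma Delta_add_le [Nonempty (Fin n)] (x y : Fin n → E2') :
    Delta (fun i => x i + y i) ≤ Delta x + Delta y := by
  refine Delta_le _ _ fun i j => ?_
  have : x i + y i - (x j + y j) = (x i - x j) + (y i - y j) := by abel
  rw [this]
  exact le_trans (norm_add_le _ _)
    (add_le_add (norm_sub_le_Delta x i j) (norm_sub_le_Delta y i j))

lemma key_ineq [Nonempty (Fin n)] (d : Fin n → ℝ) (hd : ∑ j, d j = 0)
    (x : Fin n → E2') :
    ‖∑ j, d j • x j‖ ≤ ((1/2) * ∑ j, |d j|) * Delta x := by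
  set dp : Fin n → ℝ := fun j => max (d j) 0 with hdp
  set dm : Fin n → ℝ := fun j => max (-d j) 0 with hdm
  have hdpm : ∀ j, d j = dp j - dm j := fun j => by
    simp only [hdp, hdm]
    rcases le_total (d j) 0 with h | h
    · rw [max_eq_right h, max_eq_left (neg_nonneg.2 h)]; ring
    · rw [max_eq_left h, max_eq_right (neg_nonpos.2 h)]; ring
  have habsj : ∀ j, |d j| = dp j + dm j := fun j => by
    simp only [hdp, hdm]
    rcases le_total (d j) 0 with h | h
    · rw [abs_of_nonpos h, max_eq_right h, max_eq_left (neg_nonneg.2 h)]; ring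
    · rw [abs_of_nonneg h, max_eq_left h, max_eq_right (neg_nonpos.2 h)]; ring
  set s := ∑ j, dp j with hs
  have hdm_s : ∑ j, dm j = s := by
    have := hd
    rw [Finset.sum_congr rfl (fun j _ => hdpm j), Finset.sum_sub_distrib] at this
    linarith
  have habs : ∑ j, |d j| = 2 * s := by
    rw [Finset.sum_congr rfl (fun j _ => habsj j), Finset.sum_add_distrib, hdm_s]; ring
  have hs0 : 0 ≤ s := Finset.sum_nonneg fun j _ => le_max_right _ _
  rcases eq_or_lt_of_le hs0 with hs0' | hspos
  · have hdp0 : ∀ j ∈ Finset.univ, dp j = 0 :=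
      (Finset.sum_eq_zero_iff_of_nonneg (fun j _ => le_max_right _ _)).1 hs0'.symm
    have hdm0 : ∀ j ∈ Finset.univ, dm j = 0 := by
      refine (Finset.sum_eq_zero_iff_of_nonneg (fun j _ => le_max_right _ _)).1 ?_
      rw [hdm_s]; exact hs0'.symm
    have hd0 : ∀ j, d j = 0 := fun j => by
      rw [hdpm j, hdp0 j (Finset.mem_univ j), hdm0 j (Finset.mem_univ j)]; ring
    simp [hd0, habs, ← hs0']
  · have key_eq : s • (∑ j, d j • x j) = ∑ j, ∑ l, (dp j * dm l) • (x j - x l) := by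
      have rhs : ∑ j, ∑ l, (dp j * dm l) • (x j - x l)
          = (∑ j, (dp j * s) • x j) - (∑ l, (s * dm l) • x l) := by
        simp only [smul_sub, Finset.sum_sub_distrib]
        congr 1
        · refine Finset.sum_congr rfl fun j _ => ?_
          rw [← Finset.sum_smul, ← Finset.mul_sum, hdm_s]
        · rw [Finset.sum_comm]
          refine Finset.sum_congr rfl fun l _ => ?_
          rw [← Finset.sum_smul, ← Finset.sum_mul, ← hs]
      rw [rhs, Finset.smul_sum]
      rw [← Finset.sum_sub_distrib]
      refine Finset.sum_congr rfl fun j _ => ?_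
      rw [smul_smul, ← sub_smul]
      congr 1
      rw [hdpm j]; ring
    have hnorm : s * ‖∑ j, d j • x j‖ ≤ s * s * Delta x := by
      calc s * ‖∑ j, d j • x j‖ = ‖s • ∑ j, d j • x j‖ := by
            rw [norm_smul, Real.norm_eq_abs, abs_of_pos hspos]
        _ = ‖∑ j, ∑ l, (dp j * dm l) • (x j - x l)‖ := by rw [key_eq]
        _ ≤ ∑ j, ∑ l, ‖(dp j * dm l) • (x j - x l)‖ :=
            le_trans (norm_sum_le _ _) (Finset.sum_le_sum fun j _ => norm_sum_le _ _)
        _ ≤ ∑ j, ∑ l, (dp j * dm l) * Delta x := by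
            refine Finset.sum_le_sum fun j _ => Finset.sum_le_sum fun l _ => ?_
            rw [norm_smul, Real.norm_eq_abs,
              abs_of_nonneg (mul_nonneg (le_max_right _ _) (le_max_right _ _))]
            exact mul_le_mul_of_nonneg_left (norm_sub_le_Delta x j l)
              (mul_nonneg (le_max_right _ _) (le_max_right _ _))
        _ = s * s * Delta x := by
            simp only [← Finset.sum_mul, ← Finset.mul_sum, hdm_s, ← hs]
            try ring
    have h2 : ‖∑ j, d j • x j‖ ≤ s * Delta x :=
      (mul_le_mul_iff_right₀ hspos).1 (by linarith [hnorm])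
    rw [habs]
    calc ‖∑ j, d j • x j‖ ≤ s * Delta x := h2
      _ = (1/2 * (2*s)) * Delta x := by ring

/-- all row sums equal one -/
def RowSumOne (A : Matrix (Fin n) (Fin n) ℝ) : Prop := ∀ i, ∑ j, A i j = 1

lemma rowSumOne_mul {A B : Matrix (Fin n) (Fin n) ℝ} (hA : RowSumOne A)
    (hB : RowSumOne B) : RowSumOne (A * B) := by
  intro i
  simp only [Matrix.mul_apply]
  rw [Finset.sum_comm]
  have h : ∀ s, ∑ j, A i s * B s j = A i s := fun s => by
    rw [← Finset.mul_sum, hB s, mul_one]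
  simp only [h]
  exact hA i

lemma rowSumOne_one : RowSumOne (1 : Matrix (Fin n) (Fin n) ℝ) := fun i => by
  simp [Matrix.one_apply]

lemma tau1_le_one {A : Matrix (Fin n) (Fin n) ℝ} [Nonempty (Fin n)]
    (hA : RowStochastic A) : tau1 A ≤ 1 := by
  have h : ∀ p : Fin n × Fin n, ∑ s, |A p.1 s - A p.2 s| ≤ 2 := by
    intro p
    calc ∑ s, |A p.1 s - A p.2 s| ≤ ∑ s, (A p.1 s + A p.2 s) := by
          refine Finset.sum_le_sum fun s _ => ?_
          have h1 : |A p.1 s - A p.2 s| ≤ |A p.1 s| + |A p.2 s| := abs_sub _ _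
          rwa [abs_of_nonneg (hA.1 p.1 s), abs_of_nonneg (hA.1 p.2 s)] at h1
      _ = 2 := by rw [Finset.sum_add_distrib, hA.2 p.1, hA.2 p.2]; norm_num
  have := ciSup_le h
  unfold tau1
  linarith

lemma Delta_mstep_le {A : Matrix (Fin n) (Fin n) ℝ} [Nonempty (Fin n)]
    (hA : RowSumOne A) (x : Fin n → E2') :
    Delta (mstep A x) ≤ tau1 A * Delta x := by
  refine Delta_le _ _ fun i j => ?_
  have heq : mstep A x i - mstep A x j = ∑ l, (A i l - A j l) • x l := by
    simp [mstep, sub_smul, Finset.sum_sub_distrib]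
  rw [heq]
  have hd : ∑ l, (A i l - A j l) = 0 := by
    rw [Finset.sum_sub_distrib, hA i, hA j]; ring
  refine le_trans (key_ineq _ hd x) (mul_le_mul_of_nonneg_right ?_ (Delta_nonneg x))
  have hle : ∑ s, |A i s - A j s| ≤ ⨆ p : Fin n × Fin n, ∑ s, |A p.1 s - A p.2 s| :=
    le_ciSup (f := fun p : Fin n × Fin n => ∑ s, |A p.1 s - A p.2 s|)
      (Set.Finite.bddAbove (Set.finite_range _)) (i, j)
  unfold tau1
  linarith

lemma mstep_mul (A B : Matrix (Fin n) (Fin n) ℝ) (x : Fin n → E2') :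
    mstep (A * B) x = mstep A (mstep B x) := by
  funext i
  simp only [mstep, Matrix.mul_apply, Finset.sum_smul, Finset.smul_sum, mul_smul]
  rw [Finset.sum_comm]

lemma mstep_one (x : Fin n → E2') : mstep (1 : Matrix (Fin n) (Fin n) ℝ) x = x := by
  funext i
  simp [mstep, Matrix.one_apply, ite_smul]

lemma backProd_zero (H : ℕ → Matrix (Fin n) (Fin n) ℝ) (k : ℕ) :
    backProd H k 0 = 1 := by simp [backProd]

lemma backProd_succ (H : ℕ → Matrix (Fin n) (Fin n) ℝ) (k m : ℕ) :
    backProd H k (m+1) = H (k+m) * backProd H k m := by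
  unfold backProd
  rw [List.ofFn_succ, List.prod_cons]
  have h2 : (List.ofFn fun i : Fin m => H (k + (m + 1 - 1 - (Fin.succ i).val)))
      = List.ofFn fun ℓ : Fin m => H (k + (m - 1 - ℓ.val)) := by
    congr 1
    funext j
    have h3 : m + 1 - 1 - (Fin.succ j).val = m - 1 - j.val := by
      simp only [Fin.val_succ]; omega
    rw [h3]
  rw [h2]
  have h0 : m + 1 - 1 - ((0 : Fin (m+1)).val) = m := by simp
  rw [h0]

lemma backProd_rowSumOne {H : ℕ → Matrix (Fin n) (Fin n) ℝ}
    (hH : ∀ k, RowStochastic (H k)) (k : ℕ) :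
    ∀ L, RowSumOne (backProd H k L) := by
  intro L
  induction L with
  | zero => rw [backProd_zero]; exact rowSumOne_one
  | succ m ih => rw [backProd_succ]; exact rowSumOne_mul (fun i => (hH (k+m)).2 i) ih

end lems

set_option maxHeartbeats 1000000

/-- Theorem 1: the communication-rate condition Ť > Ť* implies
β̂ = Ĉ e^{−λ̌Ť} < (1/2)((1+μ)^{1/L} − 1), and consequently the disagreement of
the perturbed consensus recursion converges to zero. -/
theorem communication_rate_condition {n : ℕ} (hn : 1 ≤ n)
    (C : ℝ) (hC : 1 ≤ C) (lam : ℝ) (hlam : 0 < lam)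
    (L : ℕ) (hL : 1 ≤ L) (μ : ℝ) (hμ : μ ∈ Set.Ioc (0:ℝ) 1)
    (T Tstar : ℝ)
    (hTstar : Tstar = -(1/lam) * Real.log (((1 + μ) ^ ((1:ℝ)/L) - 1) / (2*C)))
    (hT : T > Tstar)
    (β : ℝ) (hβ : β = C * Real.exp (-lam * T))
    (H : ℕ → Matrix (Fin n) (Fin n) ℝ) (hH : ∀ k, RowStochastic (H k))
    (hmix : ∀ k, tau1 (backProd H k L) ≤ 1 - μ)
    (p w : ℕ → Fin n → EuclideanSpace ℝ (Fin 2))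
    (hrec : ∀ k i, p (k+1) i = (∑ j, H k i j • p k j) + w k i)
    (hw : ∀ k, Delta (w k) ≤ 2 * β * Delta (p k)) :
    β < (1/2) * ((1 + μ) ^ ((1:ℝ)/L) - 1) ∧
    Tendsto (fun k => Delta (p k)) atTop (nhds 0) := by
  haveI : Nonempty (Fin n) := Fin.pos_iff_nonempty.1 hn
  have hLpos : 0 < L := hL
  have hLR : (0:ℝ) < (L:ℝ) := by exact_mod_cast hLpos
  obtain ⟨hμ0, hμ1⟩ := hμ
  have hCpos : 0 < C := lt_of_lt_of_le one_pos hC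
  -- the rpow quantity
  set R : ℝ := (1 + μ) ^ ((1:ℝ)/L) with hR
  have h1μ : (0:ℝ) < 1 + μ := by linarith
  have hR1 : 1 < R := by
    rw [hR]
    exact (Real.one_lt_rpow_iff_of_pos h1μ).2 (Or.inl ⟨by linarith, by positivity⟩)
  have hxpos : 0 < (R - 1) / (2*C) := by
    apply div_pos (by linarith) (by linarith)
  -- part 1
  have hexp : Real.exp (-lam * T) < (R - 1) / (2*C) := by
    have h1 : lam * Tstar = -Real.log ((R - 1) / (2*C)) := by
      rw [hTstar]; field_simp
    have h2 : -(lam * T) < Real.log ((R - 1) / (2*C)) := by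
      have h2' := (mul_lt_mul_iff_right₀ hlam).2 hT
      rw [h1] at h2'
      linarith
    calc Real.exp (-lam * T) < Real.exp (Real.log ((R-1)/(2*C))) := by
          apply Real.exp_lt_exp.2; linarith
      _ = (R - 1) / (2*C) := Real.exp_log hxpos
  have part1 : β < (1/2) * (R - 1) := by
    rw [hβ]
    calc C * Real.exp (-lam * T) < C * ((R - 1) / (2*C)) :=
          (mul_lt_mul_iff_right₀ hCpos).2 hexp
      _ = (1/2) * (R - 1) := by field_simp
  refine ⟨part1, ?_⟩
  -- part 2
  have hβpos : 0 < β := by rw [hβ]; positivity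
  have h2β : 2 * β < R - 1 := by linarith
  have hpowlt : (1 + 2*β) ^ L < 1 + μ := by
    have h1 : (1 + 2*β) ^ L < R ^ L :=
      pow_lt_pow_left₀ (by linarith) (by linarith) (Nat.one_le_iff_ne_zero.1 hL)
    have h2 : R ^ L = 1 + μ := by
      rw [hR, ← Real.rpow_natCast ((1+μ) ^ ((1:ℝ)/L)) L, ← Real.rpow_mul (le_of_lt h1μ)]
      rw [one_div, inv_mul_cancel₀ (ne_of_gt hLR), Real.rpow_one]
    linarith [h2 ▸ h1]
  set q : ℝ := (1 + 2*β) ^ L - μ with hq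
  have hpow1 : (1:ℝ) ≤ (1 + 2*β) ^ L := one_le_pow₀ (by linarith)
  have hq0 : 0 ≤ q := by rw [hq]; linarith
  have hq1 : q < 1 := by rw [hq]; linarith
  have hb1 : (1:ℝ) ≤ 1 + 2*β := by linarith
  -- one step growth
  have one_step : ∀ k, Delta (p (k+1)) ≤ (1 + 2*β) * Delta (p k) := by
    intro k
    have hpk1 : p (k+1) = fun i => mstep (H k) (p k) i + w k i := by
      funext i; rw [hrec k i]; rfl
    rw [hpk1]
    have h1 := Delta_add_le (mstep (H k) (p k)) (w k)
    have h2 := Delta_mstep_le (fun i => (hH k).2 i) (p k)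
    have h3 := tau1_le_one (hH k)
    have h4 := Delta_nonneg (p k)
    have h5 := hw k
    have h6 := mul_le_mul_of_nonneg_right h3 h4
    linarith
  have growth : ∀ k r, Delta (p (k+r)) ≤ (1 + 2*β) ^ r * Delta (p k) := by
    intro k r
    induction r with
    | zero => simp
    | succ m ih =>
      have h1 : k + (m+1) = (k+m) + 1 := by ring
      rw [h1]
      calc Delta (p ((k+m)+1)) ≤ (1+2*β) * Delta (p (k+m)) := one_step (k+m)
        _ ≤ (1+2*β) * ((1+2*β)^m * Delta (p k)) :=
            mul_le_mul_of_nonneg_left ih (by linarith)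
        _ = (1+2*β)^(m+1) * Delta (p k) := by ring
  -- error representation over m steps
  have rep : ∀ m k, ∃ e : Fin n → E2',
      (p (k+m) = fun i => mstep (backProd H k m) (p k) i + e i) ∧
      Delta e ≤ ∑ ℓ ∈ Finset.range m, Delta (w (k+ℓ)) := by
    intro m k
    induction m with
    | zero =>
      refine ⟨fun _ => 0, ?_, ?_⟩
      · funext i; simp [backProd_zero, mstep_one]
      · simp only [Finset.range_zero, Finset.sum_empty]
        refine Delta_le _ _ fun i j => by simp
    | succ m ih =>
      obtain ⟨e, he, hΔe⟩ := ih
      refine ⟨fun i => mstep (H (k+m)) e i + w (k+m) i, ?_, ?_⟩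
      · funext i
        have h1 : k + (m+1) = (k+m) + 1 := by ring
        rw [h1, hrec (k+m) i]
        have h2 : (∑ j, H (k+m) i j • p (k+m) j)
            = mstep (H (k+m)) (mstep (backProd H k m) (p k)) i + mstep (H (k+m)) e i := by
          rw [he]
          simp only [mstep, smul_add, Finset.sum_add_distrib]
        rw [h2, backProd_succ, mstep_mul]
        abel
      · calc Delta (fun i => mstep (H (k+m)) e i + w (k+m) i)
            ≤ Delta (mstep (H (k+m)) e) + Delta (w (k+m)) := Delta_add_le _ _
          _ ≤ Delta e + Delta (w (k+m)) := by
              have h2 := Delta_mstep_le (fun i => (hH (k+m)).2 i) e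
              have h3 := tau1_le_one (hH (k+m))
              have h4 := Delta_nonneg e
              have h5 := mul_le_mul_of_nonneg_right h3 h4
              linarith
          _ ≤ (∑ ℓ ∈ Finset.range m, Delta (w (k+ℓ))) + Delta (w (k+m)) := by linarith
          _ = ∑ ℓ ∈ Finset.range (m+1), Delta (w (k+ℓ)) := (Finset.sum_range_succ _ m).symm
  -- L-step contraction
  have Lstep : ∀ k, Delta (p (k+L)) ≤ q * Delta (p k) := by
    intro k
    obtain ⟨e, he, hΔe⟩ := rep L k
    have hsum : ∑ ℓ ∈ Finset.range L, Delta (w (k+ℓ)) ≤ ((1+2*β)^L - 1) * Delta (p k) := by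
      have hterm : ∀ ℓ ∈ Finset.range L, Delta (w (k+ℓ)) ≤ 2*β*(1+2*β)^ℓ * Delta (p k) := by
        intro ℓ _
        calc Delta (w (k+ℓ)) ≤ 2*β * Delta (p (k+ℓ)) := hw (k+ℓ)
          _ ≤ 2*β * ((1+2*β)^ℓ * Delta (p k)) :=
              mul_le_mul_of_nonneg_left (growth k ℓ) (by linarith)
          _ = 2*β*(1+2*β)^ℓ * Delta (p k) := by ring
      calc ∑ ℓ ∈ Finset.range L, Delta (w (k+ℓ))
          ≤ ∑ ℓ ∈ Finset.range L, 2*β*(1+2*β)^ℓ * Delta (p k) := Finset.sum_le_sum hterm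
        _ = ((1+2*β)^L - 1) * Delta (p k) := by
            rw [← Finset.sum_mul]
            congr 1
            calc ∑ ℓ ∈ Finset.range L, 2*β*(1+2*β)^ℓ
                = (∑ ℓ ∈ Finset.range L, (1+2*β)^ℓ) * ((1+2*β) - 1) := by
                  rw [Finset.sum_mul]
                  exact Finset.sum_congr rfl fun ℓ _ => by ring
              _ = (1+2*β)^L - 1 := geom_sum_mul _ _
    have hΔP : Delta (mstep (backProd H k L) (p k)) ≤ (1 - μ) * Delta (p k) := by
      have h1 := Delta_mstep_le (backProd_rowSumOne hH k L) (p k)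
      have h2 := hmix k
      have h3 := Delta_nonneg (p k)
      have h4 := mul_le_mul_of_nonneg_right h2 h3
      linarith
    calc Delta (p (k+L)) = Delta (fun i => mstep (backProd H k L) (p k) i + e i) := by rw [he]
      _ ≤ Delta (mstep (backProd H k L) (p k)) + Delta e := Delta_add_le _ _
      _ ≤ (1 - μ) * Delta (p k) + ((1+2*β)^L - 1) * Delta (p k) := by linarith
      _ = q * Delta (p k) := by rw [hq]; ring
  -- geometric decay along multiples of L
  have decay : ∀ m, Delta (p (m*L)) ≤ q^m * Delta (p 0) := by
    intro m
    induction m with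
    | zero => simp
    | succ m ih =>
      have h1 : (m+1)*L = m*L + L := by ring
      rw [h1]
      calc Delta (p (m*L + L)) ≤ q * Delta (p (m*L)) := Lstep (m*L)
        _ ≤ q * (q^m * Delta (p 0)) := mul_le_mul_of_nonneg_left ih hq0
        _ = q^(m+1) * Delta (p 0) := by ring
  -- global bound
  set M : ℝ := (1+2*β)^L * Delta (p 0) with hM
  have hM0 : 0 ≤ M := mul_nonneg (by positivity) (Delta_nonneg _)
  have bound : ∀ k, Delta (p k) ≤ M * q^(k/L) := by
    intro k
    have hk : (k/L)*L + k % L = k := by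
      rw [mul_comm]; exact Nat.div_add_mod k L
    have h1 : Delta (p k) ≤ (1+2*β)^(k % L) * Delta (p ((k/L)*L)) := by
      have hg := growth ((k/L)*L) (k % L)
      rwa [hk] at hg
    have h2 : Delta (p ((k/L)*L)) ≤ q^(k/L) * Delta (p 0) := decay (k/L)
    have h3 : (1+2*β)^(k % L) ≤ (1+2*β)^L :=
      pow_le_pow_right₀ hb1 (le_of_lt (Nat.mod_lt k hLpos))
    have h4 : (0:ℝ) ≤ (1+2*β)^(k % L) := by positivity
    have h5 : 0 ≤ q^(k/L) * Delta (p 0) := mul_nonneg (pow_nonneg hq0 _) (Delta_nonneg _)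
    calc Delta (p k) ≤ (1+2*β)^(k % L) * (q^(k/L) * Delta (p 0)) :=
          le_trans h1 (mul_le_mul_of_nonneg_left h2 h4)
      _ ≤ (1+2*β)^L * (q^(k/L) * Delta (p 0)) := mul_le_mul_of_nonneg_right h3 h5
      _ = M * q^(k/L) := by rw [hM]; ring
  -- conclude
  have hdiv : Tendsto (fun k : ℕ => k / L) atTop atTop :=
    tendsto_atTop_atTop.2 fun b => ⟨b * L, fun a ha => (Nat.le_div_iff_mul_le hLpos).2 ha⟩
  have hqpow : Tendsto (fun m : ℕ => q^m) atTop (nhds 0) :=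
    tendsto_pow_atTop_nhds_zero_of_lt_one hq0 hq1
  have hg : Tendsto (fun k : ℕ => M * q^(k/L)) atTop (nhds 0) := by
    have := (hqpow.comp hdiv).const_mul M
    simpa using this
  exact squeeze_zero (fun k => Delta_nonneg (p k)) bound hg
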